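/- Let A ∈ ℂ^{n×n} be positive definite with eigenvalues λ_1 ≥ … ≥ λ_n > 0 and let D ∈ ℂ^{m×m} be Hermitian with eigenvalues μ_1 ≤ … ≤ μ_r ≤ 0 < μ_{r+1} ≤ … ≤ μ_m. Then there exists a matrix K ∈ ℂ^{n×m} with ‖K‖ < 1 such that D + K*AK is positive definite (i.e., such that the block matrix S = [[A, −AK],[K*A, D]] is a J-frame matrix) if and only if r ≤ n and λ_i + μ_i > 0 for all i = 1,…,r. -/

import Mathlib

open scoped Matrix ComplexOrder

/-- The spectral (operator) norm of a complex rectangular matrix. -/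
noncomputable def specNorm {n m : ℕ} (K : Matrix (Fin n) (Fin m) ℂ) : ℝ :=
  ‖LinearMap.toContinuousLinearMap (Matrix.toEuclideanLin K)‖

/-!
Conjugating by the unitaries that diagonalise `A` and `D` preserves the spectral norm of `K`,
so we may assume `A = diag λ` and `D = diag μ`.

Necessity: for `i < r` a dimension count gives `x ≠ 0` supported on the coordinates `≤ i`
with `(K x)_j = 0` for `j < i`; then
`0 < x* (D + K* A K) x ≤ μ_i ‖x‖² + λ_i ‖K x‖² ≤ (λ_i + μ_i) ‖x‖²`.
If `r > n`, the same count gives `x ≠ 0` supported on the coordinates `≤ n` with `K x = 0`,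
and then `x* (D + K* A K) x = x* D x ≤ 0`.

Sufficiency: the `n × m` matrix `K` with `K_jj = √((λ_j - μ_j) / (2 λ_j))` for `j < r` and
zeros elsewhere has `‖K‖ < 1` because `λ_j + μ_j > 0`, and `D + K* A K` is diagonal with
entries `(λ_j + μ_j) / 2` for `j < r` and `μ_j > 0` for `j ≥ r`.
-/

open scoped Matrix.Norms.L2Operator

namespace Matrix

section

variable {m n : Type*} [Fintype n]

lemma l2_opNorm_unitary_mul [Fintype m] [DecidableEq m] [DecidableEq n] {U : Matrix m m ℂ}
    (hU : U ∈ unitaryGroup m ℂ) (B : Matrix m n ℂ) : ‖U * B‖ = ‖B‖ := by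
  have hsq : ‖U * B‖ * ‖U * B‖ = ‖B‖ * ‖B‖ := by
    rw [← l2_opNorm_conjTranspose_mul_self, ← l2_opNorm_conjTranspose_mul_self,
      conjTranspose_mul, Matrix.mul_assoc, ← Matrix.mul_assoc Uᴴ, ← star_eq_conjTranspose,
      Unitary.star_mul_self_of_mem hU, Matrix.one_mul]
  exact (mul_self_inj (norm_nonneg _) (norm_nonneg _)).mp hsq

lemma l2_opNorm_mul_unitary [Fintype m] [DecidableEq m] [DecidableEq n] {V : Matrix n n ℂ}
    (hV : V ∈ unitaryGroup n ℂ) (B : Matrix m n ℂ) : ‖B * V‖ = ‖B‖ := by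
  rw [← l2_opNorm_conjTranspose, conjTranspose_mul, ← star_eq_conjTranspose V,
    l2_opNorm_unitary_mul (Unitary.star_mem hV), l2_opNorm_conjTranspose]

lemma sum_norm_sq_mulVec_le [Fintype m] [DecidableEq n] (B : Matrix m n ℂ) (hB : ‖B‖ ≤ 1)
    (x : n → ℂ) :
    ∑ i, ‖(B *ᵥ x) i‖ ^ 2 ≤ ∑ j, ‖x j‖ ^ 2 := by
  have h := (l2_opNorm_mulVec B (WithLp.toLp 2 x)).trans
    (mul_le_of_le_one_left (norm_nonneg _) hB)
  have := pow_le_pow_left₀ (norm_nonneg _) h 2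
  simpa [EuclideanSpace.norm_sq_eq] using this

lemma star_dotProduct_diagonal_mulVec [DecidableEq n] (d : n → ℝ) (x : n → ℂ) :
    star x ⬝ᵥ (diagonal (fun i => (d i : ℂ)) *ᵥ x) = ((∑ i, d i * ‖x i‖ ^ 2 : ℝ) : ℂ) := by
  simp only [dotProduct, mulVec_diagonal, Pi.star_apply, Complex.ofReal_sum,
    Complex.ofReal_mul, Complex.ofReal_pow]
  refine Finset.sum_congr rfl fun i _ => ?_
  rw [← Complex.conj_mul', RCLike.star_def]
  ring

lemma sum_mul_norm_sq_le (d : n → ℝ) (x : n → ℂ) {a : ℝ} (h : ∀ i, x i ≠ 0 → d i ≤ a) :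
    ∑ i, d i * ‖x i‖ ^ 2 ≤ a * ∑ i, ‖x i‖ ^ 2 := by
  rw [Finset.mul_sum]
  refine Finset.sum_le_sum fun i _ => ?_
  by_cases hx : x i = 0
  · simp [hx]
  · exact mul_le_mul_of_nonneg_right (h i hx) (sq_nonneg _)

lemma PosDef.sum_mul_norm_sq_add_pos [Fintype m] [DecidableEq m] [DecidableEq n] {d : n → ℝ}
    {e : m → ℝ} {B : Matrix m n ℂ}
    (h : (diagonal (fun j => (d j : ℂ)) + Bᴴ * diagonal (fun i => (e i : ℂ)) * B).PosDef)
    {x : n → ℂ} (hx : x ≠ 0) :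
    0 < ∑ j, d j * ‖x j‖ ^ 2 + ∑ i, e i * ‖(B *ᵥ x) i‖ ^ 2 := by
  have hconj : star x ⬝ᵥ ((Bᴴ * diagonal (fun i => (e i : ℂ)) * B) *ᵥ x)
      = star (B *ᵥ x) ⬝ᵥ (diagonal (fun i => (e i : ℂ)) *ᵥ (B *ᵥ x)) := by
    rw [star_mulVec, ← dotProduct_mulVec, mulVec_mulVec, mulVec_mulVec, Matrix.mul_assoc]
  have := h.dotProduct_mulVec_pos hx
  rwa [add_mulVec, dotProduct_add, hconj, star_dotProduct_diagonal_mulVec,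
    star_dotProduct_diagonal_mulVec, ← Complex.ofReal_add, Complex.zero_lt_real] at this

lemma exists_ne_zero_mulVec_comp_eq_zero {ι κ : Type*} [Fintype ι] [Fintype κ] (B : Matrix m n ℂ)
    {e : ι → n} (he : Function.Injective e) (f : κ → m) (hcard : Fintype.card κ < Fintype.card ι) :
    ∃ x : n → ℂ, x ≠ 0 ∧ (∀ j ∉ Set.range e, x j = 0) ∧ (B *ᵥ x) ∘ f = 0 := by
  let T := LinearMap.funLeft ℂ ℂ f ∘ₗ B.mulVecLin ∘ₗ Function.ExtendByZero.linearMap ℂ e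
  obtain ⟨y, hyT, hy⟩ := Submodule.exists_mem_ne_zero_of_ne_bot
    (LinearMap.ker_ne_bot_of_finrank_lt (f := T) (by simpa using hcard))
  refine ⟨Function.extend e y 0, ?_, fun j hj => ?_, hyT⟩
  · exact fun h => hy (funext fun i => by simpa [he.extend_apply] using congrFun h (e i))
  · simp [Function.extend_apply' _ _ _ (by simpa using hj)]

lemma exists_l2_opNorm_lt_one_posDef_unitary_conj_iff [Fintype m] [DecidableEq m] [DecidableEq n]
    {U : Matrix n n ℂ} {V : Matrix m m ℂ} (hU : U ∈ unitaryGroup n ℂ) (hV : V ∈ unitaryGroup m ℂ)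
    (Λ : Matrix n n ℂ) (M : Matrix m m ℂ) :
    (∃ K : Matrix n m ℂ, ‖K‖ < 1 ∧ (V * M * Vᴴ + Kᴴ * (U * Λ * Uᴴ) * K).PosDef) ↔
      ∃ B : Matrix n m ℂ, ‖B‖ < 1 ∧ (M + Bᴴ * Λ * B).PosDef := by
  have hUU : Uᴴ * U = 1 := Unitary.star_mul_self_of_mem hU
  have hnorm (B : Matrix n m ℂ) : ‖U * B * Vᴴ‖ = ‖B‖ :=
    (l2_opNorm_mul_unitary (Unitary.star_mem hV) _).trans (l2_opNorm_unitary_mul hU B)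
  have hconj : ∀ B : Matrix n m ℂ, V * M * Vᴴ + (U * B * Vᴴ)ᴴ * (U * Λ * Uᴴ) * (U * B * Vᴴ)
      = V * (M + Bᴴ * Λ * B) * star V := fun B => by
    simp only [conjTranspose_mul, conjTranspose_conjTranspose, Matrix.mul_assoc,
      ← Matrix.mul_assoc Uᴴ U, hUU, Matrix.one_mul, Matrix.mul_add, Matrix.add_mul,
      star_eq_conjTranspose]
  have hposDef : ∀ X : Matrix m m ℂ, (V * X * star V).PosDef ↔ X.PosDef :=
    fun X => IsUnit.posDef_star_right_conjugate_iff (Unitary.isUnit_coe (U := ⟨V, hV⟩))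
  constructor
  · rintro ⟨K, hK, hpos⟩
    have hUU' : U * Uᴴ = 1 := Unitary.mul_star_self_of_mem hU
    have hVV' : V * Vᴴ = 1 := Unitary.mul_star_self_of_mem hV
    obtain ⟨B, rfl⟩ : ∃ B, K = U * B * Vᴴ := ⟨Uᴴ * K * V, by
      simp only [Matrix.mul_assoc]
      rw [hVV', Matrix.mul_one, ← Matrix.mul_assoc U, hUU', Matrix.one_mul]⟩
    rw [hnorm] at hK
    rw [hconj, hposDef] at hpos
    exact ⟨B, hK, hpos⟩
  · rintro ⟨B, hB, hpos⟩
    exact ⟨U * B * Vᴴ, by rwa [hnorm], by rwa [hconj, hposDef]⟩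

end

variable {n m : ℕ}

lemma exists_ne_zero_mulVec_eq_zero_of_le (B : Matrix (Fin n) (Fin m) ℂ) {q : ℕ} (hqm : q < m)
    (hqn : q ≤ n) :
    ∃ x : Fin m → ℂ, x ≠ 0 ∧ (∀ j, x j ≠ 0 → (j : ℕ) ≤ q) ∧
      ∀ i : Fin n, (i : ℕ) < q → (B *ᵥ x) i = 0 := by
  obtain ⟨x, hx, hsupp, hker⟩ := B.exists_ne_zero_mulVec_comp_eq_zero
    (Fin.castLE_injective (Nat.succ_le_of_lt hqm)) (Fin.castLE hqn) (by simp)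
  refine ⟨x, hx, fun j hj => ?_, fun i hi => congrFun hker ⟨i, hi⟩⟩
  by_contra hjq
  exact hj (hsupp j fun ⟨k, hk⟩ => hjq (hk ▸ Nat.le_of_lt_succ k.2))

def rectDiagonal (n m : ℕ) (t : ℕ → ℝ) : Matrix (Fin n) (Fin m) ℂ :=
  of fun i j => if (i : ℕ) = j then (t i : ℂ) else 0

lemma conjTranspose_rectDiagonal_mul_diagonal_mul_rectDiagonal (t d : ℕ → ℝ)
    (ht : ∀ j, n ≤ j → t j = 0) :
    (rectDiagonal n m t)ᴴ * diagonal (fun i : Fin n => (d i : ℂ)) * rectDiagonal n m t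
      = diagonal (fun j : Fin m => ((t j ^ 2 * d j : ℝ) : ℂ)) := by
  ext j k
  rw [mul_apply]
  simp only [mul_diagonal, conjTranspose_apply, rectDiagonal, of_apply]
  by_cases hjn : (j : ℕ) < n
  · rw [Finset.sum_eq_single (⟨j, hjn⟩ : Fin n)
      (fun i _ hi => by simp [show (i : ℕ) ≠ j from fun h => hi (Fin.ext h)]) (by simp)]
    by_cases hjk : j = k
    · subst hjk; simp; ring
    · simp [hjk, Fin.val_ne_of_ne hjk]
  · rw [Finset.sum_eq_zero (fun i _ => by simp [show (i : ℕ) ≠ j by omega])]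
    by_cases hjk : j = k
    · subst hjk; simp [ht j (by omega)]
    · simp [hjk]

lemma l2_opNorm_rectDiagonal_lt_one {t : ℕ → ℝ} (ht : ∀ j, n ≤ j → t j = 0)
    (ht1 : ∀ j, t j ^ 2 < 1) : ‖rectDiagonal n m t‖ < 1 := by
  have hsq : ‖rectDiagonal n m t‖ * ‖rectDiagonal n m t‖ < 1 := by
    rw [← l2_opNorm_conjTranspose_mul_self]
    have h := conjTranspose_rectDiagonal_mul_diagonal_mul_rectDiagonal (m := m) t (fun _ => 1) ht
    simp only [Complex.ofReal_one, mul_one, diagonal_one, Matrix.mul_one] at h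
    rw [h, l2_opNorm_diagonal, pi_norm_lt_iff one_pos]
    intro j
    rw [Complex.norm_real, Real.norm_of_nonneg (sq_nonneg _)]
    exact ht1 j
  nlinarith [norm_nonneg (rectDiagonal n m t)]

lemma le_of_posDef_diagonal_add {r : ℕ} {lam mu : ℕ → ℝ} (hrm : r ≤ m) (hmu : ∀ i < r, mu i ≤ 0)
    {B : Matrix (Fin n) (Fin m) ℂ}
    (h : (diagonal (fun j : Fin m => (mu j : ℂ))
      + Bᴴ * diagonal (fun i : Fin n => (lam i : ℂ)) * B).PosDef) :
    r ≤ n := by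
  by_contra! hnr
  obtain ⟨x, hx, hsupp, hker⟩ := B.exists_ne_zero_mulVec_eq_zero_of_le (by omega) le_rfl
  have hpos := h.sum_mul_norm_sq_add_pos hx
  have hBx : ∑ i : Fin n, lam i * ‖(B *ᵥ x) i‖ ^ 2 = 0 :=
    Finset.sum_eq_zero fun i _ => by simp [hker i i.2]
  have hmux := sum_mul_norm_sq_le (fun j : Fin m => mu j) x (a := 0)
    fun j hj => hmu j (by linarith [hsupp j hj])
  linarith

lemma add_pos_of_posDef_diagonal_add {lam mu : ℕ → ℝ} {i : ℕ} (him : i < m) (hin : i < n)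
    (hlam : ∀ k, i ≤ k → k < n → lam k ≤ lam i) (hlami : 0 ≤ lam i)
    (hmu : ∀ k ≤ i, mu k ≤ mu i)
    {B : Matrix (Fin n) (Fin m) ℂ} (hB : ‖B‖ ≤ 1)
    (h : (diagonal (fun j : Fin m => (mu j : ℂ))
      + Bᴴ * diagonal (fun i : Fin n => (lam i : ℂ)) * B).PosDef) :
    0 < lam i + mu i := by
  obtain ⟨x, hx, hsupp, hker⟩ := B.exists_ne_zero_mulVec_eq_zero_of_le him hin.le
  have hpos := h.sum_mul_norm_sq_add_pos hx
  have hmux := sum_mul_norm_sq_le (fun j : Fin m => mu j) x fun j hj => hmu j (hsupp j hj)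
  have hlamBx := sum_mul_norm_sq_le (fun k : Fin n => lam k) (B *ᵥ x) (a := lam i)
    fun k hk => hlam k (not_lt.mp fun hki => hk (hker k hki)) k.2
  have hBx := mul_le_mul_of_nonneg_left (sum_norm_sq_mulVec_le B hB x) hlami
  have hx2 : 0 < ∑ j, ‖x j‖ ^ 2 := by
    obtain ⟨j, hj⟩ := Function.ne_iff.mp hx
    exact Finset.sum_pos' (fun j _ => sq_nonneg _) ⟨j, Finset.mem_univ _, by positivity⟩
  have hprod : 0 < (lam i + mu i) * ∑ j, ‖x j‖ ^ 2 := by linarith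
  exact (pos_iff_pos_of_mul_pos hprod).mpr hx2

lemma exists_l2_opNorm_lt_one_posDef_diagonal_add {r : ℕ} {lam mu : ℕ → ℝ} (hrn : r ≤ n)
    (hlam : ∀ i < r, 0 < lam i) (hmu : ∀ i < r, mu i ≤ 0)
    (hmupos : ∀ i, r ≤ i → i < m → 0 < mu i) (hsum : ∀ i < r, 0 < lam i + mu i) :
    ∃ B : Matrix (Fin n) (Fin m) ℂ, ‖B‖ < 1 ∧ (diagonal (fun j : Fin m => (mu j : ℂ))
      + Bᴴ * diagonal (fun i : Fin n => (lam i : ℂ)) * B).PosDef := by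
  let t : ℕ → ℝ := fun j => if j < r then √((lam j - mu j) / (2 * lam j)) else 0
  have hsq : ∀ j < r, t j ^ 2 * lam j = (lam j - mu j) / 2 := fun j hj => by
    have := hlam j hj
    simp only [t, if_pos hj]
    rw [Real.sq_sqrt (div_nonneg (by linarith [hmu j hj]) (by linarith))]
    field_simp
  have ht0 : ∀ j, n ≤ j → t j = 0 := fun j hj => if_neg (by omega)
  refine ⟨rectDiagonal n m t, l2_opNorm_rectDiagonal_lt_one ht0 fun j => ?_, ?_⟩
  · by_cases hj : j < r
    · have := hsq j hj
      have := hlam j hj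
      nlinarith [hsum j hj]
    · simp [t, hj]
  · rw [conjTranspose_rectDiagonal_mul_diagonal_mul_rectDiagonal t lam ht0, diagonal_add,
      posDef_diagonal_iff]
    intro j
    rw [← Complex.ofReal_add, Complex.zero_lt_real]
    by_cases hj : (j : ℕ) < r
    · linarith [hsq j hj, hsum j hj]
    · simp only [t, if_neg hj]
      linarith [hmupos j (by omega) j.2]

lemma exists_l2_opNorm_lt_one_posDef_diagonal_add_iff {r : ℕ} (hrm : r ≤ m) (lam mu : ℕ → ℝ)
    (hlam : ∀ i j : ℕ, i ≤ j → j < n → lam j ≤ lam i) (hlampos : ∀ i : ℕ, i < n → 0 < lam i)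
    (hmu : ∀ i j : ℕ, i ≤ j → j < m → mu i ≤ mu j) (hmunonpos : ∀ i : ℕ, i < r → mu i ≤ 0)
    (hmupos : ∀ i : ℕ, r ≤ i → i < m → 0 < mu i) :
    (∃ B : Matrix (Fin n) (Fin m) ℂ, ‖B‖ < 1 ∧ (diagonal (fun j : Fin m => (mu j : ℂ))
      + Bᴴ * diagonal (fun i : Fin n => (lam i : ℂ)) * B).PosDef) ↔
      (r ≤ n ∧ ∀ i : ℕ, i < r → 0 < lam i + mu i) := by
  constructor
  · rintro ⟨B, hB, h⟩
    have hrn := le_of_posDef_diagonal_add hrm hmunonpos h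
    refine ⟨hrn, fun i hi => add_pos_of_posDef_diagonal_add (by omega) (by omega)
      (hlam i) (hlampos i (by omega)).le (fun k hki => hmu k i hki (by omega)) hB.le h⟩
  · rintro ⟨hrn, hsum⟩
    exact exists_l2_opNorm_lt_one_posDef_diagonal_add hrn (fun i hi => hlampos i (by omega))
      hmunonpos hmupos hsum

end Matrix

lemma specNorm_eq_l2_opNorm {n m : ℕ} (K : Matrix (Fin n) (Fin m) ℂ) : specNorm K = ‖K‖ := rfl

theorem exists_JframeMatrix_iff_general
    (n m r : ℕ) (hrm : r ≤ m)
    (A : Matrix (Fin n) (Fin n) ℂ) (D : Matrix (Fin m) (Fin m) ℂ)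
    (lam mu : ℕ → ℝ)
    (hlam : ∀ i j : ℕ, i ≤ j → j < n → lam j ≤ lam i)
    (hlampos : ∀ i : ℕ, i < n → 0 < lam i)
    (hmu : ∀ i j : ℕ, i ≤ j → j < m → mu i ≤ mu j)
    (hmunonpos : ∀ i : ℕ, i < r → mu i ≤ 0)
    (hmupos : ∀ i : ℕ, r ≤ i → i < m → 0 < mu i)
    (hAdiag : ∃ U ∈ Matrix.unitaryGroup (Fin n) ℂ,
      A = U * Matrix.diagonal (fun i : Fin n => (lam i : ℂ)) * Uᴴ)
    (hDdiag : ∃ V ∈ Matrix.unitaryGroup (Fin m) ℂ,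
      D = V * Matrix.diagonal (fun j : Fin m => (mu j : ℂ)) * Vᴴ) :
    (∃ K : Matrix (Fin n) (Fin m) ℂ, specNorm K < 1 ∧ (D + Kᴴ * A * K).PosDef) ↔
      (r ≤ n ∧ ∀ i : ℕ, i < r → 0 < lam i + mu i) := by
  obtain ⟨U, hU, rfl⟩ := hAdiag
  obtain ⟨V, hV, rfl⟩ := hDdiag
  simp only [specNorm_eq_l2_opNorm]
  rw [Matrix.exists_l2_opNorm_lt_one_posDef_unitary_conj_iff hU hV]
  exact Matrix.exists_l2_opNorm_lt_one_posDef_diagonal_add_iff hrm lam mu hlam hlampos hmu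
    hmunonpos hmupos

/-- Let `A ∈ ℂ^{n×n}` be positive definite with eigenvalues (nonincreasing)
`lam 0 ≥ … ≥ lam (n-1) > 0` and let `D ∈ ℂ^{m×m}` be Hermitian with eigenvalues
(nondecreasing) `mu 0 ≤ … ≤ mu (r-1) ≤ 0 < mu r ≤ … ≤ mu (m-1)`.  Then there is a strict
contraction `K ∈ ℂ^{n×m}` (`‖K‖ < 1`) such that `D + KᴴAK` is positive definite (i.e. such
that `S = [[A, −AK],[KᴴA, D]]` is a J-frame matrix) if and only if `r ≤ n` and
`lam i + mu i > 0` for all `i < r`. -/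
theorem exists_JframeMatrix_iff
    (n m r : ℕ) (hrm : r ≤ m)
    (A : Matrix (Fin n) (Fin n) ℂ) (D : Matrix (Fin m) (Fin m) ℂ)
    (hA : A.PosDef)
    (lam mu : ℕ → ℝ)
    (hlam : ∀ i j : ℕ, i ≤ j → j < n → lam j ≤ lam i)
    (hlampos : ∀ i : ℕ, i < n → 0 < lam i)
    (hmu : ∀ i j : ℕ, i ≤ j → j < m → mu i ≤ mu j)
    (hmunonpos : ∀ i : ℕ, i < r → mu i ≤ 0)
    (hmupos : ∀ i : ℕ, r ≤ i → i < m → 0 < mu i)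
    (hAdiag : ∃ U ∈ Matrix.unitaryGroup (Fin n) ℂ,
      A = U * Matrix.diagonal (fun i : Fin n => (lam i : ℂ)) * Uᴴ)
    (hDdiag : ∃ V ∈ Matrix.unitaryGroup (Fin m) ℂ,
      D = V * Matrix.diagonal (fun j : Fin m => (mu j : ℂ)) * Vᴴ) :
    (∃ K : Matrix (Fin n) (Fin m) ℂ, specNorm K < 1 ∧ (D + Kᴴ * A * K).PosDef) ↔
      (r ≤ n ∧ ∀ i : ℕ, i < r → 0 < lam i + mu i) :=
  exists_JframeMatrix_iff_general n m r hrm A D lam mu hlam hlampos hmu hmunonpos hmupos hAdiag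
    hDdiag
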